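/- Let Λ be a finite set with N := |Λ|, and let m and m' both lie in the range of m_N. Viewing μ_MC^{m;N} and μ_MC^{m';N} as probability measures on ℝ^Λ ≅ ℝ^N supported on {−1,1}^Λ, the specific 1-norm fluctuation distance satisfies exactly w₁(μ_MC^{m;N}, μ_MC^{m';N}; N) = |m' − m|. -/

import Mathlib

open MeasureTheory

/-- The specific `p`-norm fluctuation distance `w_p(μ₁, μ₂; N)` for probability measures on
`ℝ^Λ` with `N = |Λ|`. -/
noncomputable def fluctDist (p : ℝ) {ι : Type} [Fintype ι] (μ₁ μ₂ : Measure (ι → ℝ)) : ℝ :=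
  sInf {c : ℝ | ∃ γ : Measure ((ι → ℝ) × (ι → ℝ)), IsProbabilityMeasure γ ∧
      γ.map Prod.fst = μ₁ ∧ γ.map Prod.snd = μ₂ ∧
      c = ∫ xy, (Fintype.card ι : ℝ)⁻¹ * ∑ i, |xy.1 i - xy.2 i| ^ p ∂γ} ^ (1 / p)

/-- The magnetization `M[φ] = ∑_{x ∈ Λ} φ(x)` of a spin configuration `φ ∈ {−1,1}^Λ`,
encoded as `φ : Λ → Bool` with `true ↦ 1`, `false ↦ −1`. -/
noncomputable def mag {Λ : Type} [Fintype Λ] (φ : Λ → Bool) : ℝ :=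
  ∑ x, if φ x then (1 : ℝ) else -1

-- The set `S_m` of configurations with magnetization density `m`.
open Classical in
noncomputable def magSet (Λ : Type) [Fintype Λ] (m : ℝ) : Finset (Λ → Bool) :=
  Finset.univ.filter fun φ => mag φ / (Fintype.card Λ) = m

/-- The auxiliary microcanonical ensemble `μ_MC^{m;N}`, the uniform probability measure on
`S_m`, viewed as a measure on `ℝ^Λ` supported on `{−1,1}^Λ`. -/
noncomputable def mcMeasure (Λ : Type) [Fintype Λ] [DecidableEq Λ] (m : ℝ) :
    Measure (Λ → ℝ) :=
  (((magSet Λ m).card : ENNReal))⁻¹ •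
    ∑ φ ∈ magSet Λ m, Measure.dirac fun x => if φ x then (1 : ℝ) else -1

/-!
Every configuration in the support of `μ_MC^{m;N}` has spin sum `N m`, so for any coupling
`N⁻¹ ∑ |x_i - y_i| ≥ N⁻¹ |∑ x_i - ∑ y_i| = |m' - m|` almost surely. The bound is attained by a
monotone coupling: pick a pair `A ⊆ B` of up-spin sets with `|A| = k ≤ k' = |B|` uniformly at
random. Every `k`-set lies in the same number of `k'`-sets and vice versa, so both marginals are
uniform, and the two configurations differ by `2` at exactly `k' - k` sites.
-/

open Finset
open scoped ENNReal

section UniformPush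

variable {α β X Y : Type*} [MeasurableSpace X] [MeasurableSpace Y]

noncomputable def uniformPush (s : Finset α) (f : α → X) : Measure X :=
  (#s : ℝ≥0∞)⁻¹ • ∑ a ∈ s, Measure.dirac (f a)

lemma isProbabilityMeasure_uniformPush {s : Finset α} (hs : s.Nonempty) (f : α → X) :
    IsProbabilityMeasure (uniformPush s f) := by
  constructor
  simp only [uniformPush, Measure.smul_apply, Measure.finsetSum_apply, measure_univ,
    sum_const, nsmul_eq_mul, mul_one, smul_eq_mul]
  exact ENNReal.inv_mul_cancel (by simpa using hs.ne_empty) (ENNReal.natCast_ne_top _)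

lemma map_uniformPush (s : Finset α) (f : α → X) {g : X → Y} (hg : Measurable g) :
    (uniformPush s f).map g = uniformPush s (g ∘ f) := by
  rw [uniformPush, uniformPush, Measure.map_smul, ← Measure.mapₗ_apply_of_measurable hg, map_sum]
  simp only [Measure.mapₗ_apply_of_measurable hg, Measure.map_dirac' hg, Function.comp_apply]

lemma ae_uniformPush [MeasurableSingletonClass X] {s : Finset α} {f : α → X} {P : X → Prop}
    (h : ∀ a ∈ s, P (f a)) : ∀ᵐ x ∂uniformPush s f, P x := by
  rw [ae_iff, uniformPush, Measure.smul_apply, Measure.coe_finsetSum, Finset.sum_apply,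
    sum_eq_zero fun a ha => by simp [Measure.dirac_apply, h a ha], smul_zero]

lemma integral_uniformPush [MeasurableSingletonClass X] {s : Finset α} (hs : s.Nonempty)
    {f : α → X} {F : X → ℝ} {c : ℝ} (h : ∀ a ∈ s, F (f a) = c) :
    ∫ x, F x ∂uniformPush s f = c := by
  rw [uniformPush, integral_smul_measure,
    integral_finsetSum_measure fun a _ => integrable_dirac enorm_lt_top]
  simp only [integral_dirac]
  rw [sum_congr rfl h, sum_const, nsmul_eq_mul, ENNReal.toReal_inv, ENNReal.toReal_natCast,
    smul_eq_mul, ← mul_assoc, inv_mul_cancel₀ (by simpa using hs.ne_empty), one_mul]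

lemma uniformPush_sigma_fst {T : α → Finset β} {n : ℕ} {s : Finset α}
    (hT : ∀ a ∈ s, #(T a) = n) (hn : n ≠ 0) (f : α → X) :
    uniformPush (s.sigma T) (fun p => f p.1) = uniformPush s f := by
  have hsum : ∑ p ∈ s.sigma T, Measure.dirac (f p.1) = n • ∑ a ∈ s, Measure.dirac (f a) := by
    rw [sum_sigma, smul_sum]
    exact sum_congr rfl fun a ha => by simp only [sum_const, hT a ha]
  rw [uniformPush, uniformPush, hsum, card_sigma, sum_congr rfl hT, sum_const, smul_eq_mul,
    ← Nat.cast_smul_eq_nsmul ℝ≥0∞, smul_smul, Nat.cast_mul, ENNReal.mul_inv (by simp) (by simp),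
    mul_assoc, ENNReal.inv_mul_cancel (by simpa using hn) (by simp), mul_one]

end UniformPush

section Coupling

variable {X Y : Type*} [MeasurableSpace X] [MeasurableSpace Y]

def IsCoupling (γ : Measure (X × Y)) (μ : Measure X) (ν : Measure Y) : Prop :=
  IsProbabilityMeasure γ ∧ γ.map Prod.fst = μ ∧ γ.map Prod.snd = ν

lemma IsCoupling.swap {γ : Measure (X × Y)} {μ : Measure X} {ν : Measure Y}
    (h : IsCoupling γ μ ν) : IsCoupling (γ.map Prod.swap) ν μ := by
  obtain ⟨hγ, hμ, hν⟩ := h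
  refine ⟨Measure.isProbabilityMeasure_map measurable_swap.aemeasurable, ?_, ?_⟩
  · rw [Measure.map_map measurable_fst measurable_swap]; exact hν
  · rw [Measure.map_map measurable_snd measurable_swap]; exact hμ

variable {α β : Type*} {s : Finset α} {t : Finset β} {r : α → β → Prop}
  [∀ a b, Decidable (r a b)]

lemma uniformPush_sigma_bipartiteAbove_snd (g : β → Y) :
    uniformPush (s.sigma fun a => t.bipartiteAbove r a) (fun p => g p.2) =
      uniformPush (t.sigma fun b => s.bipartiteBelow r b) (fun p => g p.1) := by
  rw [uniformPush, uniformPush, card_sigma, card_sigma,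
    sum_card_bipartiteAbove_eq_sum_card_bipartiteBelow, sum_sigma, sum_sigma,
    sum_sum_bipartiteAbove_eq_sum_sum_bipartiteBelow]

lemma nonempty_sigma_of_card_eq {T : α → Finset β} {m : ℕ} (hs : s.Nonempty)
    (hT : ∀ a ∈ s, #(T a) = m) (hm0 : m ≠ 0) : (s.sigma T).Nonempty := by
  obtain ⟨a, ha⟩ := hs
  exact sigma_nonempty.2 ⟨a, ha, card_pos.1 (by rw [hT a ha]; positivity)⟩

lemma isCoupling_uniformPush_bipartite {m n : ℕ} (hs : s.Nonempty)
    (hm : ∀ a ∈ s, #(t.bipartiteAbove r a) = m) (hn : ∀ b ∈ t, #(s.bipartiteBelow r b) = n)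
    (hm0 : m ≠ 0) (hn0 : n ≠ 0) (f : α → X) (g : β → Y) :
    IsCoupling (uniformPush (s.sigma fun a => t.bipartiteAbove r a) fun p => (f p.1, g p.2))
      (uniformPush s f) (uniformPush t g) := by
  refine ⟨isProbabilityMeasure_uniformPush (nonempty_sigma_of_card_eq hs hm hm0) _, ?_, ?_⟩
  · rw [map_uniformPush _ _ measurable_fst]
    exact uniformPush_sigma_fst hm hm0 f
  · rw [map_uniformPush _ _ measurable_snd]
    exact (uniformPush_sigma_bipartiteAbove_snd g).trans (uniformPush_sigma_fst hn hn0 g)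

end Coupling

section L1Cost

variable {ι : Type} [Fintype ι]

noncomputable def l1Cost (xy : (ι → ℝ) × (ι → ℝ)) : ℝ :=
  (Fintype.card ι : ℝ)⁻¹ * ∑ i, |xy.1 i - xy.2 i|

lemma measurable_l1Cost : Measurable (l1Cost (ι := ι)) := by
  unfold l1Cost; fun_prop

lemma l1Cost_swap (xy : (ι → ℝ) × (ι → ℝ)) : l1Cost xy.swap = l1Cost xy := by
  simp only [l1Cost, Prod.fst_swap, Prod.snd_swap, abs_sub_comm (xy.2 _)]

lemma integral_l1Cost_map_swap (γ : Measure ((ι → ℝ) × (ι → ℝ))) :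
    ∫ xy, l1Cost xy ∂γ.map Prod.swap = ∫ xy, l1Cost xy ∂γ := by
  rw [integral_map measurable_swap.aemeasurable measurable_l1Cost.aestronglyMeasurable]
  simp only [l1Cost_swap]

lemma fluctDist_one_eq {μ ν : Measure (ι → ℝ)} {c : ℝ}
    (hle : ∀ γ, IsCoupling γ μ ν → c ≤ ∫ xy, l1Cost xy ∂γ)
    (hex : ∃ γ, IsCoupling γ μ ν ∧ ∫ xy, l1Cost xy ∂γ = c) :
    fluctDist 1 μ ν = c := by
  simp only [fluctDist, Real.rpow_one, div_one]
  refine IsLeast.csInf_eq ⟨?_, ?_⟩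
  · obtain ⟨γ, ⟨hγ, hμ, hν⟩, rfl⟩ := hex
    exact ⟨γ, hγ, hμ, hν, rfl⟩
  · rintro _ ⟨γ, hγ, hμ, hν, rfl⟩
    exact hle γ ⟨hγ, hμ, hν⟩

def cubeSlice (ι : Type) [Fintype ι] (a : ℝ) : Set (ι → ℝ) :=
  {x | (∀ i, |x i| ≤ 1) ∧ (∑ i, x i) / Fintype.card ι = a}

lemma abs_sub_le_l1Cost {a b : ℝ} {x y : ι → ℝ} (hx : x ∈ cubeSlice ι a)
    (hy : y ∈ cubeSlice ι b) : |b - a| ≤ l1Cost (x, y) := by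
  rw [← hx.2, ← hy.2, div_sub_div_same, abs_div, Nat.abs_cast, div_eq_inv_mul, l1Cost,
    abs_sub_comm, ← sum_sub_distrib]
  gcongr
  exact abs_sum_le_sum_abs _ _

lemma l1Cost_le_two {a b : ℝ} {x y : ι → ℝ} (hx : x ∈ cubeSlice ι a)
    (hy : y ∈ cubeSlice ι b) : l1Cost (x, y) ≤ 2 := by
  have hterm (i : ι) : |x i - y i| ≤ 2 :=
    (abs_sub _ _).trans (by linarith [hx.1 i, hy.1 i])
  calc l1Cost (x, y) ≤ (Fintype.card ι : ℝ)⁻¹ * (Fintype.card ι * 2) := by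
        unfold l1Cost
        gcongr
        simpa using sum_le_sum fun i (_ : i ∈ univ) => hterm i
    _ ≤ 2 := by
        rcases (Nat.cast_nonneg (α := ℝ) (Fintype.card ι)).eq_or_lt with h | h
        · simp [← h]
        · rw [inv_mul_cancel_left₀ h.ne']

lemma IsCoupling.abs_sub_le_integral_l1Cost {γ : Measure ((ι → ℝ) × (ι → ℝ))}
    {μ ν : Measure (ι → ℝ)} {a b : ℝ} (hγ : IsCoupling γ μ ν)
    (hμ : ∀ᵐ x ∂μ, x ∈ cubeSlice ι a) (hν : ∀ᵐ y ∂ν, y ∈ cubeSlice ι b) :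
    |b - a| ≤ ∫ xy, l1Cost xy ∂γ := by
  obtain ⟨hprob, rfl, rfl⟩ := hγ
  have hslice : ∀ᵐ xy ∂γ, xy.1 ∈ cubeSlice ι a ∧ xy.2 ∈ cubeSlice ι b :=
    (ae_of_ae_map measurable_fst.aemeasurable hμ).and
      (ae_of_ae_map measurable_snd.aemeasurable hν)
  have hint : Integrable l1Cost γ := by
    refine (integrable_const (2 : ℝ)).mono' measurable_l1Cost.aestronglyMeasurable ?_
    filter_upwards [hslice] with xy hxy
    rw [Real.norm_of_nonneg (by unfold l1Cost; positivity)]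
    exact l1Cost_le_two hxy.1 hxy.2
  calc |b - a| = ∫ _, |b - a| ∂γ := by simp
    _ ≤ ∫ xy, l1Cost xy ∂γ :=
      integral_mono_ae (integrable_const _) hint
        (hslice.mono fun xy hxy => abs_sub_le_l1Cost hxy.1 hxy.2)

end L1Cost

section Spins

variable {Λ : Type} [Fintype Λ]

/-- The magnetization density of the configurations with `k` up spins. -/
noncomputable def magDensity (Λ : Type) [Fintype Λ] (k : ℕ) : ℝ :=
  (2 * k - Fintype.card Λ) / Fintype.card Λ

lemma magDensity_mono : Monotone (magDensity Λ) := by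
  intro a b h
  unfold magDensity
  gcongr

lemma eq_of_magDensity_eq {a b : ℕ} (ha : a ≤ Fintype.card Λ) (hb : b ≤ Fintype.card Λ)
    (h : magDensity Λ a = magDensity Λ b) : a = b := by
  rcases Nat.eq_zero_or_pos (Fintype.card Λ) with h0 | h0
  · omega
  · have hN : (Fintype.card Λ : ℝ) ≠ 0 := by positivity
    rw [magDensity, magDensity, div_left_inj' hN] at h
    exact_mod_cast (by linarith : (a : ℝ) = b)

variable [DecidableEq Λ]

def spinOf (A : Finset Λ) : Λ → ℝ := fun x => if x ∈ A then 1 else -1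

noncomputable def uniformSpins (Λ : Type) [Fintype Λ] [DecidableEq Λ] (k : ℕ) :
    Measure (Λ → ℝ) :=
  uniformPush (powersetCard k (univ : Finset Λ)) spinOf

lemma sum_spinOf (A : Finset Λ) : ∑ x, spinOf A x = 2 * #A - Fintype.card Λ := by
  have h (x : Λ) : spinOf A x = 2 * (if x ∈ A then 1 else 0) - 1 := by
    unfold spinOf; split_ifs <;> norm_num
  simp only [h, sum_sub_distrib, ← mul_sum, sum_boole, filter_mem_eq_inter, univ_inter,
    sum_const, card_univ, nsmul_eq_mul, mul_one]

lemma spinOf_mem_cubeSlice (A : Finset Λ) : spinOf A ∈ cubeSlice Λ (magDensity Λ #A) :=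
  ⟨fun x => by unfold spinOf; split_ifs <;> norm_num, by rw [sum_spinOf, magDensity]⟩

lemma ae_mem_cubeSlice_uniformSpins (k : ℕ) :
    ∀ᵐ x ∂uniformSpins Λ k, x ∈ cubeSlice Λ (magDensity Λ k) :=
  ae_uniformPush fun A hA => (mem_powersetCard.1 hA).2 ▸ spinOf_mem_cubeSlice A

lemma l1Cost_spinOf_of_subset {A B : Finset Λ} (h : A ⊆ B) :
    l1Cost (spinOf A, spinOf B) = magDensity Λ #B - magDensity Λ #A := by
  have habs (x : Λ) : |spinOf A x - spinOf B x| = spinOf B x - spinOf A x := by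
    by_cases hA : x ∈ A
    · simp [spinOf, hA, h hA]
    · by_cases hB : x ∈ B <;> norm_num [spinOf, hA, hB]
  simp only [l1Cost, habs, sum_sub_distrib, sum_spinOf, magDensity, div_sub_div_same,
    inv_mul_eq_div]

lemma card_filter_subset_powersetCard (k : ℕ) (B : Finset Λ) :
    #{A ∈ powersetCard k univ | A ⊆ B} = (#B).choose k := by
  rw [← card_powersetCard]
  congr 1
  ext A
  simp [mem_powersetCard, and_comm]

lemma card_filter_supset_powersetCard {k : ℕ} (hk : k ≤ Fintype.card Λ) (A : Finset Λ) :
    #{B ∈ powersetCard k univ | A ⊆ B} = (Fintype.card Λ - #A).choose (Fintype.card Λ - k) := by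
  rw [← card_compl, ← card_powersetCard]
  refine card_nbij' compl compl (fun B hB => ?_) (fun C hC => ?_) (fun B _ => compl_compl B)
    (fun C _ => compl_compl C)
  · simp only [mem_coe, mem_filter, mem_powersetCard, subset_univ, true_and,
      compl_subset_compl] at hB ⊢
    rw [card_compl, hB.1]
    exact ⟨hB.2, rfl⟩
  · simp only [mem_coe, mem_filter, mem_powersetCard, subset_univ, true_and] at hC ⊢
    have := card_le_univ C
    exact ⟨by rw [card_compl]; omega, subset_compl_comm.mp hC.1⟩

lemma exists_isCoupling_uniformSpins {k k' : ℕ} (hkk' : k ≤ k') (hk' : k' ≤ Fintype.card Λ) :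
    ∃ γ, IsCoupling γ (uniformSpins Λ k) (uniformSpins Λ k') ∧
      ∫ xy, l1Cost xy ∂γ = magDensity Λ k' - magDensity Λ k := by
  set s := powersetCard k (univ : Finset Λ)
  set t := powersetCard k' (univ : Finset Λ)
  have hs : s.Nonempty := powersetCard_nonempty.2 (by simpa using hkk'.trans hk')
  have hm : ∀ A ∈ s, #(t.bipartiteAbove (· ⊆ ·) A) =
      (Fintype.card Λ - k).choose (Fintype.card Λ - k') := fun A hA => by
    rw [bipartiteAbove, card_filter_supset_powersetCard hk', (mem_powersetCard.1 hA).2]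
  have hn : ∀ B ∈ t, #(s.bipartiteBelow (· ⊆ ·) B) = k'.choose k := fun B hB => by
    rw [bipartiteBelow, card_filter_subset_powersetCard, (mem_powersetCard.1 hB).2]
  have hm0 := (Nat.choose_pos (Nat.sub_le_sub_left hkk' (Fintype.card Λ))).ne'
  refine ⟨_, isCoupling_uniformPush_bipartite hs hm hn hm0 (Nat.choose_pos hkk').ne' _ _, ?_⟩
  refine integral_uniformPush (nonempty_sigma_of_card_eq hs hm hm0) fun p hp => ?_
  obtain ⟨hA, hB⟩ := mem_sigma.1 hp
  obtain ⟨hB, hAB⟩ := (mem_bipartiteAbove _).1 hB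
  rw [l1Cost_spinOf_of_subset hAB, (mem_powersetCard.1 hA).2, (mem_powersetCard.1 hB).2]

theorem fluctDist_one_uniformSpins {k k' : ℕ} (hk : k ≤ Fintype.card Λ)
    (hk' : k' ≤ Fintype.card Λ) :
    fluctDist 1 (uniformSpins Λ k) (uniformSpins Λ k') = |magDensity Λ k' - magDensity Λ k| := by
  refine fluctDist_one_eq (fun γ hγ => hγ.abs_sub_le_integral_l1Cost
    (ae_mem_cubeSlice_uniformSpins k) (ae_mem_cubeSlice_uniformSpins k')) ?_
  rcases le_total k k' with h | h
  · obtain ⟨γ, hγ, hcost⟩ := exists_isCoupling_uniformSpins h hk'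
    exact ⟨γ, hγ, by rw [hcost, abs_of_nonneg (sub_nonneg.2 (magDensity_mono h))]⟩
  · obtain ⟨γ, hγ, hcost⟩ := exists_isCoupling_uniformSpins h hk
    refine ⟨γ.map Prod.swap, hγ.swap, ?_⟩
    rw [integral_l1Cost_map_swap, hcost, abs_sub_comm,
      abs_of_nonneg (sub_nonneg.2 (magDensity_mono h))]

end Spins

section Configurations

variable {Λ : Type} [DecidableEq Λ]

def boolIndicator : Finset Λ ↪ (Λ → Bool) where
  toFun A x := decide (x ∈ A)
  inj' A B h := by ext x; simpa using congrFun h x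

@[simp] lemma boolIndicator_apply (A : Finset Λ) (x : Λ) : boolIndicator A x = decide (x ∈ A) :=
  rfl

variable [Fintype Λ]

def upSet (φ : Λ → Bool) : Finset Λ := {x | φ x = true}

lemma upSet_boolIndicator (A : Finset Λ) : upSet (boolIndicator A) = A := by
  ext x; simp [upSet]

lemma boolIndicator_upSet (φ : Λ → Bool) : boolIndicator (upSet φ) = φ := by
  funext x; simp [upSet]

lemma mag_div_card (φ : Λ → Bool) : mag φ / Fintype.card Λ = magDensity Λ #(upSet φ) := by
  have hspin : spinOf (upSet φ) = fun x => if φ x then (1 : ℝ) else -1 := by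
    funext x; simp [spinOf, upSet]
  rw [mag, ← hspin, sum_spinOf, magDensity]

lemma magSet_magDensity {k : ℕ} (hk : k ≤ Fintype.card Λ) :
    magSet Λ (magDensity Λ k) = (powersetCard k univ).map boolIndicator := by
  ext φ
  simp only [magSet, mem_filter, mem_univ, true_and, mem_map, mem_powersetCard, subset_univ,
    mag_div_card]
  constructor
  · intro h
    exact ⟨upSet φ, eq_of_magDensity_eq (card_le_univ _) hk h, boolIndicator_upSet φ⟩
  · rintro ⟨A, rfl, rfl⟩
    rw [upSet_boolIndicator]

lemma mcMeasure_magDensity {k : ℕ} (hk : k ≤ Fintype.card Λ) :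
    mcMeasure Λ (magDensity Λ k) = uniformSpins Λ k := by
  rw [mcMeasure, magSet_magDensity hk, card_map, sum_map, uniformSpins, uniformPush]
  congr! with A x
  simp [spinOf]

end Configurations

theorem stmt5 (Λ : Type) [Fintype Λ] [DecidableEq Λ] (m m' : ℝ)
    (hm : ∃ φ : Λ → Bool, mag φ / (Fintype.card Λ) = m)
    (hm' : ∃ φ : Λ → Bool, mag φ / (Fintype.card Λ) = m') :
    fluctDist 1 (mcMeasure Λ m) (mcMeasure Λ m') = |m' - m| := by
  obtain ⟨φ, rfl⟩ := hm
  obtain ⟨ψ, rfl⟩ := hm'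
  rw [mag_div_card, mag_div_card, mcMeasure_magDensity (card_le_univ _),
    mcMeasure_magDensity (card_le_univ _)]
  exact fluctDist_one_uniformSpins (card_le_univ _) (card_le_univ _)
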